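/- arXiv:1905.06667 — 3 statements merged into one kernel-verified Lean document; each statement's English description precedes it below -/
import Mathlib

section
/- Let u ∈ ℂ^N with u ≠ 0, let b ≥ 0, and let x ∈ ℂ^N be such that |u^H x| > √b. Define P(x) = x + ((√b − |u^H x|)/(‖u‖² |u^H x|)) · (u^H x) · u. Then P(x) is the orthogonal projection of x onto C(u,b): for every z ∈ ℂ^N with |u^H z|² ≤ b one has ‖x − P(x)‖ ≤ ‖x − z‖, with equality only if z = P(x). -/
/-- If `|u^H x| > √b`, then
`P(x) = x + ((√b − |u^H x|)/(‖u‖² |u^H x|)) (u^H x) u`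
is the orthogonal projection of `x` onto `C(u,b)`: for every `z` with
`|u^H z|² ≤ b` one has `‖x − P(x)‖ ≤ ‖x − z‖`, with equality only if `z = P(x)`. -/
theorem rank_one_projection_is_closest (N : ℕ)
    (u : EuclideanSpace ℂ (Fin N)) (hu : u ≠ 0) (b : ℝ) (hb : 0 ≤ b)
    (x : EuclideanSpace ℂ (Fin N)) (hx : Real.sqrt b < ‖(inner ℂ u x : ℂ)‖)
    (P : EuclideanSpace ℂ (Fin N))
    (hP : P = x + ((Real.sqrt b - ‖(inner ℂ u x : ℂ)‖) /
        (‖u‖ ^ 2 * ‖(inner ℂ u x : ℂ)‖)) • ((inner ℂ u x : ℂ) • u)) :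
    ∀ z : EuclideanSpace ℂ (Fin N), ‖(inner ℂ u z : ℂ)‖ ^ 2 ≤ b →
      ‖x - P‖ ≤ ‖x - z‖ ∧ (‖x - P‖ = ‖x - z‖ → z = P) := by
  intro z hz
  set w : ℂ := (inner ℂ u x : ℂ) with hw
  set v : ℂ := (inner ℂ u z : ℂ) with hv
  set a : ℝ := ‖w‖ with ha
  have hb' : 0 ≤ Real.sqrt b := Real.sqrt_nonneg b
  have ha0 : 0 < a := lt_of_le_of_lt hb' hx
  have hu0 : 0 < ‖u‖ := norm_pos_iff.mpr hu
  set s : ℝ := (Real.sqrt b - a) / (‖u‖ ^ 2 * a) with hs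
  have hsneg : s < 0 := div_neg_of_neg_of_pos (by linarith) (by positivity)
  have hvb : ‖v‖ ≤ Real.sqrt b := by
    have := Real.sqrt_le_sqrt hz
    rwa [Real.sqrt_sq (norm_nonneg v)] at this
  -- rewrite P using complex scalar
  have hP' : P = x + (((s : ℂ) * w) • u) := by
    rw [hP, RCLike.real_smul_eq_coe_smul (K := ℂ), smul_smul]
    rfl
  have hxP : x - P = (-( (s : ℂ) * w)) • u := by
    rw [hP']; module
  -- inner u P
  have hip : (inner ℂ u P : ℂ) = ((Real.sqrt b / a : ℝ) : ℂ) * w := by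
    rw [hP', inner_add_right, inner_smul_right, ← hw,
      @inner_self_eq_norm_sq_to_K ℂ]
    push_cast [hs]
    have h1 : (a : ℂ) ≠ 0 := by exact_mod_cast ha0.ne'
    have h2 : (‖u‖ : ℂ) ≠ 0 := by exact_mod_cast hu0.ne'
    field_simp
    simp only [RCLike.ofReal_eq_complex_ofReal]
    ring
  -- key: re ⟪x - P, P - z⟫ ≥ 0
  have hre : 0 ≤ Complex.re (inner ℂ (x - P) (P - z) : ℂ) := by
    rw [hxP, inner_smul_left, inner_sub_right, hip, ← hv]
    have hrew : (starRingEnd ℂ) w * w = ((a ^ 2 : ℝ) : ℂ) := by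
      rw [Complex.conj_mul', ← Complex.ofReal_pow]
    have hwv : Complex.re ((starRingEnd ℂ) w * v) ≤ a * Real.sqrt b := by
      calc Complex.re ((starRingEnd ℂ) w * v) ≤ ‖(starRingEnd ℂ) w * v‖ :=
            Complex.re_le_norm _
        _ = a * ‖v‖ := by rw [norm_mul, RCLike.norm_conj]
        _ ≤ a * Real.sqrt b := by
            exact mul_le_mul_of_nonneg_left hvb ha0.le
    have : (starRingEnd ℂ) (-((s:ℂ) * w)) * (((Real.sqrt b / a : ℝ) : ℂ) * w - v)
        = ((-s : ℝ) : ℂ) * (((Real.sqrt b / a : ℝ) : ℂ) * ((starRingEnd ℂ) w * w)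
          - (starRingEnd ℂ) w * v) := by
      push_cast
      simp only [map_mul, map_neg, Complex.conj_ofReal]
      ring
    rw [this, hrew]
    have h3 : (((Real.sqrt b / a : ℝ) : ℂ) * ((a ^ 2 : ℝ) : ℂ) - (starRingEnd ℂ) w * v)
        = ((Real.sqrt b / a * a ^ 2 : ℝ) : ℂ) - (starRingEnd ℂ) w * v := by
      push_cast; ring
    rw [h3, Complex.re_ofReal_mul, Complex.sub_re, Complex.ofReal_re]
    have hsq : Real.sqrt b / a * a ^ 2 = a * Real.sqrt b := by
      field_simp
    rw [hsq]
    have : 0 ≤ -s := by linarith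
    nlinarith [hwv]
  -- norm identity
  have hsplit : ‖x - z‖ ^ 2 = ‖x - P‖ ^ 2 + 2 * Complex.re (inner ℂ (x - P) (P - z) : ℂ)
      + ‖P - z‖ ^ 2 := by
    have : x - z = (x - P) + (P - z) := by abel
    rw [this, @norm_add_sq ℂ]
    simp [RCLike.re_to_complex]
    simp [inner_sub_left, inner_sub_right, Complex.sub_re]
  have hle2 : ‖x - P‖ ^ 2 + ‖P - z‖ ^ 2 ≤ ‖x - z‖ ^ 2 := by
    rw [hsplit]; linarith
  have hle : ‖x - P‖ ≤ ‖x - z‖ := by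
    have h4 : ‖x - P‖ ^ 2 ≤ ‖x - z‖ ^ 2 := by nlinarith [sq_nonneg ‖P - z‖]
    have := Real.sqrt_le_sqrt h4
    rwa [Real.sqrt_sq (norm_nonneg _), Real.sqrt_sq (norm_nonneg _)] at this
  refine ⟨hle, fun heq => ?_⟩
  have hsq : ‖x - P‖ ^ 2 = ‖x - z‖ ^ 2 := by rw [heq]
  have h0 : ‖P - z‖ ^ 2 ≤ 0 := by linarith
  have h1 : ‖P - z‖ ^ 2 = 0 := le_antisymm h0 (sq_nonneg _)
  have h2 : ‖P - z‖ = 0 := by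
    have := pow_eq_zero_iff (n := 2) (by norm_num) |>.mp h1
    exact this
  have := sub_eq_zero.mp (norm_eq_zero.mp h2)
  exact this.symm
end

section
/- Let u ∈ ℂ^N with u ≠ 0, let b ≥ 0, and let x ∈ ℂ^N be such that |u^H x| > √b. Then the distance from x to the set C(u,b), namely inf{‖x − z‖ : z ∈ C(u,b)}, equals (|u^H x| − √b)/‖u‖. -/
/-- If `|u^H x| > √b`, then the distance from `x` to the set
`C(u,b) = {z : |u^H z|² ≤ b}` equals `(|u^H x| − √b)/‖u‖`. -/
theorem dist_to_rank_one_constraint_set (N : ℕ)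
    (u : EuclideanSpace ℂ (Fin N)) (hu : u ≠ 0) (b : ℝ) (hb : 0 ≤ b)
    (x : EuclideanSpace ℂ (Fin N)) (hx : Real.sqrt b < ‖(inner ℂ u x : ℂ)‖) :
    Metric.infDist x {z : EuclideanSpace ℂ (Fin N) | ‖(inner ℂ u z : ℂ)‖ ^ 2 ≤ b} =
      (‖(inner ℂ u x : ℂ)‖ - Real.sqrt b) / ‖u‖ := by
  set a : ℝ := ‖(inner ℂ u x : ℂ)‖ with ha
  have hu0 : (0:ℝ) < ‖u‖ := norm_pos_iff.mpr hu
  have hsb : (0:ℝ) ≤ Real.sqrt b := Real.sqrt_nonneg b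
  have ha0 : (0:ℝ) < a := lt_of_le_of_lt hsb hx
  have hA : ((a : ℝ) : ℂ) ≠ 0 := Complex.ofReal_ne_zero.mpr ha0.ne'
  have hU : ((‖u‖ : ℝ) : ℂ) ≠ 0 := Complex.ofReal_ne_zero.mpr hu0.ne'
  -- explicit nearest point
  set c : ℂ := (((a - Real.sqrt b) / (a * ‖u‖^2) : ℝ) : ℂ) * (inner ℂ u x : ℂ) with hc
  set z : EuclideanSpace ℂ (Fin N) := x - c • u with hz
  have hinnz : (inner ℂ u z : ℂ) = ((Real.sqrt b / a : ℝ) : ℂ) * (inner ℂ u x : ℂ) := by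
    rw [hz, inner_sub_right, inner_smul_right, inner_self_eq_norm_sq_to_K (𝕜 := ℂ), hc]
    push_cast
    field_simp
    simp only [Complex.coe_algebraMap]
    ring
  have hnormz : ‖(inner ℂ u z : ℂ)‖ = Real.sqrt b := by
    rw [hinnz, norm_mul, Complex.norm_real, Real.norm_of_nonneg (by positivity), ← ha,
      div_mul_cancel₀ _ ha0.ne']
  have hmem : z ∈ {z : EuclideanSpace ℂ (Fin N) | ‖(inner ℂ u z : ℂ)‖ ^ 2 ≤ b} := by
    show ‖(inner ℂ u z : ℂ)‖ ^ 2 ≤ b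
    rw [hnormz, Real.sq_sqrt hb]
  have hdist : dist x z = (a - Real.sqrt b) / ‖u‖ := by
    have hxz : x - z = c • u := by simp [hz]
    rw [dist_eq_norm, hxz, norm_smul, hc, norm_mul, Complex.norm_real,
      Real.norm_of_nonneg (div_nonneg (by linarith) (by positivity)), ← ha]
    field_simp
  refine le_antisymm ?_ ?_
  · calc Metric.infDist x _ ≤ dist x z := Metric.infDist_le_dist_of_mem hmem
    _ = _ := hdist
  · have key : ∀ y ∈ {z : EuclideanSpace ℂ (Fin N) | ‖(inner ℂ u z : ℂ)‖ ^ 2 ≤ b},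
        (a - Real.sqrt b) / ‖u‖ ≤ dist x y := by
      intro y hy
      have hy' : ‖(inner ℂ u y : ℂ)‖ ^ 2 ≤ b := hy
      have hyb : ‖(inner ℂ u y : ℂ)‖ ≤ Real.sqrt b := by
        nlinarith [Real.sq_sqrt hb, norm_nonneg (inner ℂ u y : ℂ)]
      have hcs : ‖(inner ℂ u (x - y) : ℂ)‖ ≤ ‖u‖ * ‖x - y‖ := norm_inner_le_norm u (x - y)
      have htri : a - ‖(inner ℂ u y : ℂ)‖ ≤ ‖(inner ℂ u (x - y) : ℂ)‖ := by
        rw [inner_sub_right]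
        have := norm_sub_norm_le (inner ℂ u x : ℂ) (inner ℂ u y : ℂ)
        linarith
      rw [dist_eq_norm, div_le_iff₀ hu0]
      calc a - Real.sqrt b ≤ a - ‖(inner ℂ u y : ℂ)‖ := by linarith
      _ ≤ ‖u‖ * ‖x - y‖ := le_trans htri hcs
      _ = ‖x - y‖ * ‖u‖ := mul_comm _ _
    rw [Metric.infDist_eq_iInf]
    haveI : Nonempty {z : EuclideanSpace ℂ (Fin N) | ‖(inner ℂ u z : ℂ)‖ ^ 2 ≤ b} := ⟨⟨z, hmem⟩⟩
    exact le_ciInf fun y => key y y.2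
end

section
/- Let u ∈ ℂ^N with u ≠ 0, let b ≥ 0, and define the map P : ℂ^N → ℂ^N by P(x) = x if |u^H x| ≤ √b, and P(x) = x + ((√b − |u^H x|)/(‖u‖² |u^H x|)) · (u^H x) · u otherwise. Then for every x ∈ ℂ^N and every z ∈ C(u,b), the inequality Re⟨x − P(x), z − P(x)⟩ ≤ 0 holds (the variational characterization of the projection onto the closed convex set C(u,b)). -/
/-- Variational characterization of the projection onto `C(u,b)`: with
`P(x) = x` if `|u^H x| ≤ √b` and
`P(x) = x + ((√b − |u^H x|)/(‖u‖² |u^H x|)) (u^H x) u` otherwise, one has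
`Re⟨x − P(x), z − P(x)⟩ ≤ 0` for every `x` and every `z ∈ C(u,b)`. -/
theorem rank_one_projection_variational_inequality (N : ℕ)
    (u : EuclideanSpace ℂ (Fin N)) (hu : u ≠ 0) (b : ℝ) (hb : 0 ≤ b)
    (P : EuclideanSpace ℂ (Fin N) → EuclideanSpace ℂ (Fin N))
    (hP : ∀ x, P x =
      if ‖(inner ℂ u x : ℂ)‖ ≤ Real.sqrt b then x
      else x + ((Real.sqrt b - ‖(inner ℂ u x : ℂ)‖) /
          (‖u‖ ^ 2 * ‖(inner ℂ u x : ℂ)‖)) • ((inner ℂ u x : ℂ) • u)) :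
    ∀ (x z : EuclideanSpace ℂ (Fin N)), ‖(inner ℂ u z : ℂ)‖ ^ 2 ≤ b →
      (inner ℂ (x - P x) (z - P x) : ℂ).re ≤ 0 := by
  intro x z hz
  rw [hP]
  by_cases h : ‖(inner ℂ u x : ℂ)‖ ≤ Real.sqrt b
  · simp only [if_pos h, sub_self, inner_zero_left, Complex.zero_re, le_refl]
  · simp only [h, if_false]
    set a : ℂ := (inner ℂ u x : ℂ) with ha
    set β : ℂ := (inner ℂ u z : ℂ) with hβ
    set t : ℝ := ‖a‖ with ht
    set s : ℝ := Real.sqrt b with hs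
    have hs0 : 0 ≤ s := Real.sqrt_nonneg b
    have hts : s < t := lt_of_not_ge h
    have ht0 : 0 < t := lt_of_le_of_lt hs0 hts
    have hu0 : (0:ℝ) < ‖u‖ := norm_pos_iff.mpr hu
    have hβs : ‖β‖ ≤ s := by
      rw [hs]
      have : ‖β‖ = Real.sqrt (‖β‖ ^ 2) := by
        rw [Real.sqrt_sq (norm_nonneg _)]
      rw [this]
      exact Real.sqrt_le_sqrt hz
    set c : ℝ := (s - t) / (‖u‖ ^ 2 * t) with hc
    have hc0 : c ≤ 0 := by
      apply div_nonpos_of_nonpos_of_nonneg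
      · linarith
      · positivity
    -- rewrite the smul
    have hsm : c • (a • u) = ((c : ℂ) * a) • u := by
      rw [← smul_smul, Complex.coe_smul]
    rw [hsm]
    have haa : (starRingEnd ℂ) a * a = ((t^2 : ℝ) : ℂ) := by
      rw [mul_comm, Complex.mul_conj, Complex.normSq_eq_norm_sq, ht]
    have key : (inner ℂ (x - (x + ((c : ℂ) * a) • u)) (z - (x + ((c : ℂ) * a) • u)) : ℂ)
        = -(c : ℂ) * ((starRingEnd ℂ) a * β - ((t * s : ℝ) : ℂ)) := by
      have huu : (inner ℂ u u : ℂ) = ((‖u‖ ^ 2 : ℝ) : ℂ) := by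
        rw [inner_self_eq_norm_sq_to_K]; norm_cast
      have h1 : x - (x + ((c : ℂ) * a) • u) = (-((c : ℂ) * a)) • u := by
        rw [neg_smul]; abel
      rw [h1, inner_smul_left, inner_sub_right, inner_add_right, inner_smul_right,
        ← ha, ← hβ, huu]
      have hct : (c : ℝ) * ‖u‖^2 * t = s - t := by
        rw [hc]; field_simp
      have hct' : ((c : ℂ)) * ((‖u‖^2 : ℝ) : ℂ) * ((t : ℝ) : ℂ) = ((s : ℝ) : ℂ) - ((t:ℝ):ℂ) := by
        norm_cast
      have hconj : (starRingEnd ℂ) (-((c : ℂ) * a)) = -((c:ℂ) * (starRingEnd ℂ) a) := by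
        simp [map_mul, Complex.conj_ofReal]
      rw [hconj]
      have expand : -((c:ℂ) * (starRingEnd ℂ) a) * (β - (a + (c:ℂ) * a * ((‖u‖^2:ℝ):ℂ)))
          = -(c:ℂ) * ((starRingEnd ℂ) a * β)
            + (c:ℂ) * ((starRingEnd ℂ) a * a) * (1 + (c:ℂ) * ((‖u‖^2:ℝ):ℂ)) := by ring
      rw [expand, haa]
      have : (c:ℂ) * ((t^2:ℝ):ℂ) * (1 + (c:ℂ) * ((‖u‖^2:ℝ):ℂ)) = (c:ℂ) * ((t*s:ℝ):ℂ) := by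
        have h2 : (c : ℝ) * t ^ 2 * (1 + c * ‖u‖^2) = c * (t * s) := by
          have ht' : t ≠ 0 := ne_of_gt ht0
          have hu' : ‖u‖ ≠ 0 := ne_of_gt hu0
          rw [hc]; field_simp; ring
        exact_mod_cast h2
      rw [this]; ring
    rw [key]
    have hre : (-(c : ℂ) * ((starRingEnd ℂ) a * β - ((t * s : ℝ) : ℂ))).re
        = -c * (((starRingEnd ℂ) a * β).re - t * s) := by
      have : -(c : ℂ) = ((-c : ℝ) : ℂ) := by push_cast; ring
      rw [this, Complex.re_ofReal_mul, Complex.sub_re, Complex.ofReal_re]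
    rw [hre]
    have hbound : ((starRingEnd ℂ) a * β).re ≤ t * s := by
      calc ((starRingEnd ℂ) a * β).re ≤ ‖(starRingEnd ℂ) a * β‖ := Complex.re_le_norm _
        _ = t * ‖β‖ := by rw [norm_mul, RCLike.norm_conj]
        _ ≤ t * s := by nlinarith
    nlinarith
end
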